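/- arXiv:1606.08668 — 7 statements merged into one kernel-verified Lean document; each statement's English description precedes it below -/
import Mathlib

section
/- Let S be a finite set of states with a total transition relation →, let C be a finite set of predicates on S, and let σ : ℕ → S be an infinite path such that every predicate f ∈ C holds at infinitely many indices of σ. Then there exists a finite path s′₀,...,s′ₙ (consecutive states related by →), an index p ≤ n−1 with s′ₙ = s′ₚ, all states s′ⱼ occurring in σ, and for each f ∈ C there is some q with p ≤ q ≤ n such that f holds at s′_q. -/
/-!
Some state `s` is visited by `σ` infinitely often; fix one visit at time `p`. Every fairness
predicate holds at some time `≥ p`, so for all large `n` each of them holds somewhere in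
`[p, n]`; choosing such an `n` with `σ n = s` turns the segment `σ p, …, σ n` into the loop
of a lasso whose states all lie on `σ`.
-/

open Filter Set

theorem Set.Infinite.eventually_exists_mem_Icc {A : Set ℕ} (hA : A.Infinite) (p : ℕ) :
    ∀ᶠ n in atTop, ∃ q ∈ Icc p n, q ∈ A := by
  obtain ⟨q, hqA, hpq⟩ := hA.exists_gt p
  filter_upwards [eventually_ge_atTop q] with n hqn
  exact ⟨q, ⟨hpq.le, hqn⟩, hqA⟩

theorem fair_infinite_to_finite_general
    {S : Type*} [Fintype S] (r : S → S → Prop)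
    (C : Finset (S → Prop))
    (σ : ℕ → S) (hstep : ∀ i, r (σ i) (σ (i + 1)))
    (hfair : ∀ f ∈ C, {i : ℕ | f (σ i)}.Infinite) :
    ∃ (s' : ℕ → S) (n p : ℕ),
      (∀ i < n, r (s' i) (s' (i + 1))) ∧
      p < n ∧ s' n = s' p ∧
      (∀ j ≤ n, ∃ i, s' j = σ i) ∧
      (∀ f ∈ C, ∃ q, p ≤ q ∧ q ≤ n ∧ f (s' q)) := by
  obtain ⟨s, hs⟩ := Finite.exists_infinite_fiber σ
  have hvisits : (σ ⁻¹' {s}).Infinite := infinite_coe_iff.mp hs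
  obtain ⟨p, hp⟩ := hvisits.nonempty
  have hreturn : ∃ᶠ n in atTop, σ n = s := Nat.frequently_atTop_iff_infinite.mpr hvisits
  have hcover : ∀ᶠ n in atTop, p < n ∧ ∀ f ∈ C, ∃ q ∈ Icc p n, q ∈ {i | f (σ i)} :=
    (eventually_gt_atTop p).and <|
      (eventually_all_finset C).mpr fun f hf => (hfair f hf).eventually_exists_mem_Icc p
  obtain ⟨n, hn, hpn, hC⟩ := (hreturn.and_eventually hcover).exists
  refine ⟨σ, n, p, fun i _ => hstep i, hpn, hn.trans hp.symm, fun j _ => ⟨j, rfl⟩, ?_⟩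
  intro f hf
  obtain ⟨q, ⟨hpq, hqn⟩, hfq⟩ := hC f hf
  exact ⟨q, hpq, hqn, hfq⟩

/-- From a fair infinite path one extracts a finite lasso path on
which every fairness predicate holds somewhere in the loop. -/
theorem fair_infinite_to_finite
    {S : Type*} [Fintype S] (r : S → S → Prop)
    (htot : ∀ s, ∃ t, r s t)
    (C : Finset (S → Prop))
    (σ : ℕ → S) (hstep : ∀ i, r (σ i) (σ (i + 1)))
    (hfair : ∀ f ∈ C, {i : ℕ | f (σ i)}.Infinite) :
    ∃ (s' : ℕ → S) (n p : ℕ),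
      (∀ i < n, r (s' i) (s' (i + 1))) ∧
      p < n ∧ s' n = s' p ∧
      (∀ j ≤ n, ∃ i, s' j = σ i) ∧
      (∀ f ∈ C, ∃ q, p ≤ q ∧ q ≤ n ∧ f (s' q)) :=
  fair_infinite_to_finite_general r C σ hstep hfair
end

section
/- Let S be a finite set of states with a total transition relation →, and for each state s let Next(s) = {s′ : s → s′}. Let Φ be a set of states and T a finite rooted tree labeled by states such that for each internal node labeled s, its children are labeled exactly by the elements of Next(s), and each leaf is labeled by a state that is either in Φ or equal to the label of some ancestor node on the branch from the root to this leaf. Then there exists a (possibly infinite) tree T′ labeled by states, with the same root label as T, such that for each internal node labeled s the children are labeled exactly by the elements of Next(s), all leaves are labeled by elements of Φ, and every label occurring in T′ occurs in T. -/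
/-!
Let `A` be the set of labels occurring in `T`. If `a ∈ A \ Φ`, look at a node of minimal depth
labeled `a`: it cannot be a leaf, since its label would then repeat a shallower ancestor, so its
children carry all successors of `a`. Hence `A` is closed under successors outside `Φ`, and the
tree of all paths from the root through `A` that stop exactly when they hit `Φ` is the required
`T'`; by totality its leaves lie in `Φ`.
-/

/-- A (possibly infinite) rooted state-labeled tree with full `Next`-branching
at internal nodes.  A node is represented by the reversed path of labels from
the root to it (the head of the list is the node's own label, the last element
is the root's label). -/
structure StateTree (S : Type*) (r : S → S → Prop) (root : S) where
  /-- the set of nodes, each given by its reversed root-path -/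
  mem : List S → Prop
  root_mem : mem [root]
  last_root : ∀ l, mem l → l.getLast? = some root
  tail_mem : ∀ a l, mem (a :: l) → l ≠ [] → mem l
  /-- at an internal node the children are labeled exactly by the
  `r`-successors of the node's label -/
  branching : ∀ a l, mem (a :: l) → (∃ b, mem (b :: a :: l)) →
      ∀ b, (mem (b :: a :: l) ↔ r a b)

namespace StateTree

variable {S : Type*} {r : S → S → Prop} {root : S}

def labels (T : StateTree S r root) : Set S := {a | ∃ l, T.mem (a :: l)}

lemma mem_of_mem_append (T : StateTree S r root) {l₂ : List S} (hne : l₂ ≠ []) :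
    ∀ l₁ : List S, T.mem (l₁ ++ l₂) → T.mem l₂
  | [], h => h
  | c :: l₁, h => T.mem_of_mem_append hne l₁ (T.tail_mem c _ h (by simp [hne]))

lemma rel_mem_labels (T : StateTree S r root) {Φ : Set S}
    (hleaf : ∀ a l, T.mem (a :: l) → (∀ b, ¬ T.mem (b :: a :: l)) → a ∈ Φ ∨ a ∈ l)
    {a b : S} (ha : a ∈ T.labels) (haΦ : a ∉ Φ) (hab : r a b) : b ∈ T.labels := by
  classical
  have hdepth : ∃ n, ∃ l : List S, l.length = n ∧ T.mem (a :: l) :=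
    let ⟨l, hl⟩ := ha; ⟨l.length, l, rfl, hl⟩
  obtain ⟨l, hlen, hl⟩ := Nat.find_spec hdepth
  by_cases hinternal : ∃ c, T.mem (c :: a :: l)
  · exact ⟨a :: l, (T.branching a l hl hinternal b).2 hab⟩
  simp only [not_exists] at hinternal
  obtain ⟨l₁, l₂, rfl⟩ := List.append_of_mem ((hleaf a l hl hinternal).resolve_left haΦ)
  have hshallower : T.mem (a :: l₂) := T.mem_of_mem_append (by simp) (a :: l₁) (by simpa using hl)
  have hlt : l₂.length < Nat.find hdepth := by simp only [List.length_append, List.length_cons] at hlen; omega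
  exact absurd ⟨l₂, rfl, hshallower⟩ (Nat.find_min hdepth hlt)

variable (r) (Φ A : Set S)

/-- Reversed `r`-paths from `root` with all labels in `A`, meeting `Φ` at most in their last
label. -/
def IsStoppedPath (root : S) (L : List S) : Prop :=
  L.getLast? = some root ∧ L.IsChain (flip r) ∧ (∀ x ∈ L, x ∈ A) ∧ ∀ x ∈ L.tail, x ∉ Φ

variable {r Φ A}

lemma isStoppedPath_cons_cons {a b : S} {l : List S} :
    IsStoppedPath r Φ A root (b :: a :: l) ↔
      r a b ∧ b ∈ A ∧ a ∉ Φ ∧ IsStoppedPath r Φ A root (a :: l) := by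
  simp only [IsStoppedPath, List.getLast?_cons_cons, List.isChain_cons_cons, flip,
    List.forall_mem_cons, List.tail_cons]
  tauto

variable (Φ)

def stoppedPathTree (hroot : root ∈ A) (hA : ∀ a ∈ A, a ∉ Φ → ∀ b, r a b → b ∈ A) :
    StateTree S r root where
  mem := IsStoppedPath r Φ A root
  root_mem := ⟨rfl, List.isChain_singleton _, by simpa using hroot, by simp⟩
  last_root _ h := h.1
  tail_mem a l h hne := by
    obtain ⟨b, l, rfl⟩ := List.exists_cons_of_ne_nil hne
    exact (isStoppedPath_cons_cons.1 h).2.2.2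
  branching a l h := by
    rintro ⟨c, hc⟩ b
    have haΦ : a ∉ Φ := (isStoppedPath_cons_cons.1 hc).2.2.1
    rw [isStoppedPath_cons_cons]
    exact ⟨fun h => h.1, fun hab => ⟨hab, hA a (h.2.2.1 a (by simp)) haΦ b hab, haΦ, h⟩⟩

variable {Φ}

lemma stoppedPathTree_leaf_mem (htot : ∀ s, ∃ t, r s t) (hroot : root ∈ A)
    (hA : ∀ a ∈ A, a ∉ Φ → ∀ b, r a b → b ∈ A) {a : S} {l : List S}
    (h : (stoppedPathTree Φ hroot hA).mem (a :: l))
    (hleaf : ∀ b, ¬ (stoppedPathTree Φ hroot hA).mem (b :: a :: l)) : a ∈ Φ := by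
  by_contra haΦ
  obtain ⟨b, hab⟩ := htot a
  exact hleaf b (isStoppedPath_cons_cons.2 ⟨hab, hA a (h.2.2.1 a (by simp)) haΦ b hab, haΦ, h⟩)

lemma labels_stoppedPathTree_subset (hroot : root ∈ A)
    (hA : ∀ a ∈ A, a ∉ Φ → ∀ b, r a b → b ∈ A) : (stoppedPathTree Φ hroot hA).labels ⊆ A :=
  fun a ⟨_, h⟩ => h.2.2.1 a (by simp)

end StateTree

theorem finite_to_possibly_infinite_trees_general
    {S : Type*} (r : S → S → Prop)
    (htot : ∀ s, ∃ t, r s t)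
    (Φ : Set S) (root : S) (T : StateTree S r root)
    (hleaf : ∀ a l, T.mem (a :: l) → (∀ b, ¬ T.mem (b :: a :: l)) →
      a ∈ Φ ∨ a ∈ l) :
    ∃ T' : StateTree S r root,
      (∀ a l, T'.mem (a :: l) → (∀ b, ¬ T'.mem (b :: a :: l)) → a ∈ Φ) ∧
      (∀ a, (∃ l, T'.mem (a :: l)) → ∃ l, T.mem (a :: l)) := by
  have hroot : root ∈ T.labels := ⟨[], T.root_mem⟩
  have hclosed : ∀ a ∈ T.labels, a ∉ Φ → ∀ b, r a b → b ∈ T.labels :=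
    fun _ ha haΦ _ hab => T.rel_mem_labels hleaf ha haΦ hab
  exact ⟨StateTree.stoppedPathTree Φ hroot hclosed,
    fun _ _ => StateTree.stoppedPathTree_leaf_mem htot hroot hclosed,
    fun _ ha => StateTree.labels_stoppedPathTree_subset hroot hclosed ha⟩

/-- Finite to possibly infinite trees.  If a finite
`Next`-branching tree has each leaf labeled either in `Φ` or by the label of an
ancestor, then there is a (possibly infinite) `Next`-branching tree with the
same root, all leaves labeled in `Φ`, and all labels among those of `T`. -/
theorem finite_to_possibly_infinite_trees
    {S : Type*} [Fintype S] (r : S → S → Prop)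
    (htot : ∀ s, ∃ t, r s t)
    (Φ : Set S) (root : S) (T : StateTree S r root)
    (hfin : {l | T.mem l}.Finite)
    (hleaf : ∀ a l, T.mem (a :: l) → (∀ b, ¬ T.mem (b :: a :: l)) →
      a ∈ Φ ∨ a ∈ l) :
    ∃ T' : StateTree S r root,
      (∀ a l, T'.mem (a :: l) → (∀ b, ¬ T'.mem (b :: a :: l)) → a ∈ Φ) ∧
      (∀ a, (∃ l, T'.mem (a :: l)) → ∃ l, T.mem (a :: l)) :=
  finite_to_possibly_infinite_trees_general r htot Φ root T hleaf
end

section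
/- Let S be a finite set of states with a total transition relation →, Φ a set of states, and T a possibly infinite rooted tree labeled by states such that for each internal node labeled s, the children are labeled exactly by the elements of Next(s), and each leaf is labeled by a state in Φ. Then there exists a finite rooted tree labeled by states, with the same root label, such that for each internal node labeled s the children are labeled by the elements of Next(s), and each leaf is labeled by a state that is either in Φ or equal to the label of an ancestor on its branch. -/
namespace StateTree

variable {S : Type*} {r : S → S → Prop} {root : S}

def IsLeaf (T : StateTree S r root) (l : List S) : Prop :=
  T.mem l ∧ ∀ b, ¬ T.mem (b :: l)

def pruneAtRepeat (T : StateTree S r root) : StateTree S r root where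
  mem l := T.mem l ∧ l.tail.Nodup
  root_mem := ⟨T.root_mem, List.nodup_nil⟩
  last_root l hl := T.last_root l hl.1
  tail_mem a l hl hne := ⟨T.tail_mem a l hl.1 hne, hl.2.sublist l.tail_sublist⟩
  branching := by
    rintro a l ⟨hmem, -⟩ ⟨b, hb, hnodup⟩ c
    rw [← T.branching a l hmem ⟨b, hb⟩ c]
    exact ⟨And.left, fun hc => ⟨hc, hnodup⟩⟩

theorem finite_pruneAtRepeat [Finite S] (T : StateTree S r root) :
    {l | T.pruneAtRepeat.mem l}.Finite := by
  refine (List.finite_length_le S (Nat.card S + 1)).subset ?_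
  rintro l ⟨-, hnodup⟩
  have := hnodup.length_le_natCard
  rw [List.length_tail] at this
  show l.length ≤ Nat.card S + 1
  omega

theorem isLeaf_or_mem_of_isLeaf_pruneAtRepeat {T : StateTree S r root} {a : S} {l : List S}
    (h : T.pruneAtRepeat.IsLeaf (a :: l)) : T.IsLeaf (a :: l) ∨ a ∈ l := by
  obtain ⟨⟨hmem, hnodup⟩, hno_child⟩ := h
  by_cases ha : a ∈ l
  · exact Or.inr ha
  · exact Or.inl ⟨hmem, fun b hb => hno_child b ⟨hb, List.nodup_cons.mpr ⟨ha, hnodup⟩⟩⟩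

end StateTree

theorem possibly_infinite_to_finite_trees_general
    {S : Type*} [Fintype S] (r : S → S → Prop)
    (Φ : Set S) (root : S) (T : StateTree S r root)
    (hleaf : ∀ a l, T.mem (a :: l) → (∀ b, ¬ T.mem (b :: a :: l)) → a ∈ Φ) :
    ∃ T' : StateTree S r root,
      {l | T'.mem l}.Finite ∧
      (∀ a l, T'.mem (a :: l) → (∀ b, ¬ T'.mem (b :: a :: l)) →
        a ∈ Φ ∨ a ∈ l) := by
  refine ⟨T.pruneAtRepeat, T.finite_pruneAtRepeat, fun a l hmem hno_child => ?_⟩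
  exact (StateTree.isLeaf_or_mem_of_isLeaf_pruneAtRepeat ⟨hmem, hno_child⟩).imp_left
    fun h => hleaf a l h.1 h.2

/-- Possibly infinite to finite trees.  If a (possibly infinite)
`Next`-branching tree has every leaf labeled in `Φ`, then there is a finite
`Next`-branching tree with the same root in which every leaf is labeled either
in `Φ` or by the label of an ancestor on its branch. -/
theorem possibly_infinite_to_finite_trees
    {S : Type*} [Fintype S] (r : S → S → Prop)
    (htot : ∀ s, ∃ t, r s t)
    (Φ : Set S) (root : S) (T : StateTree S r root)
    (hleaf : ∀ a l, T.mem (a :: l) → (∀ b, ¬ T.mem (b :: a :: l)) → a ∈ Φ) :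
    ∃ T' : StateTree S r root,
      {l | T'.mem l}.Finite ∧
      (∀ a l, T'.mem (a :: l) → (∀ b, ¬ T'.mem (b :: a :: l)) →
        a ∈ Φ ∨ a ∈ l) :=
  possibly_infinite_to_finite_trees_general r Φ root T hleaf
end

section
/- Let S be a finite set with a total relation → and let P : S → Prop. Define the semantic relation EG(P, s) to hold iff there exists an infinite path s₀, s₁, ... with s₀ = s, sᵢ → sᵢ₊₁, and P(sᵢ) for all i. Define provability inductively: a sequent Γ ⊢ EG(P, s) (where Γ is a finite set of states) is derivable if either s ∈ Γ (merge rule), or P(s) holds and Γ ∪ {s} ⊢ EG(P, s′) is derivable for some s′ ∈ Next(s). Then ∅ ⊢ EG(P, s) is derivable if and only if EG(P, s) holds semantically. -/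
/-!
Both directions go through post-fixed points of `X ↦ P ∩ EX X`, i.e. sets `A` all of whose
states satisfy `P` and have a successor in `A`; the states with an infinite `P`-path form the
largest one. A derivation of `Γ ⊢ EG(P, s)` is such a set relative to `Γ` (its states are the
ones added to the context), so for `Γ = ∅` it is a genuine post-fixed point containing `s`.
Conversely, from a post-fixed point one derives `Γ ⊢ EG(P, s)` by following successors inside
it until the state is already in `Γ`; this terminates because each step enlarges `Γ` and the
state space is finite.
-/

/-- Derivability of the sequent `Γ ⊢ EG(P, s)`: either `s` already occurs in
the context `Γ` (merge rule), or `P s` holds and the sequent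
`Γ ∪ {s} ⊢ EG(P, s')` is derivable for some successor `s'` of `s`. -/
inductive EGDeriv {S : Type*} [DecidableEq S] (r : S → S → Prop)
    (P : S → Prop) : Finset S → S → Prop
  | merge {Γ : Finset S} {s : S} : s ∈ Γ → EGDeriv r P Γ s
  | step {Γ : Finset S} {s s' : S} : P s → r s s' →
      EGDeriv r P (insert s Γ) s' → EGDeriv r P Γ s

section

variable {S : Type*} {r : S → S → Prop} {P : S → Prop}

def IsEGPostFixed (r : S → S → Prop) (P : S → Prop) (A : Set S) : Prop :=
  ∀ a ∈ A, P a ∧ ∃ b ∈ A, r a b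

theorem exists_path_iff_exists_isEGPostFixed {s : S} :
    (∃ σ : ℕ → S, σ 0 = s ∧ ∀ i, r (σ i) (σ (i + 1)) ∧ P (σ i)) ↔
      ∃ A, IsEGPostFixed r P A ∧ s ∈ A := by
  constructor
  · rintro ⟨σ, rfl, hσ⟩
    refine ⟨Set.range σ, ?_, Set.mem_range_self 0⟩
    rintro _ ⟨i, rfl⟩
    exact ⟨(hσ i).2, σ (i + 1), Set.mem_range_self _, (hσ i).1⟩
  · rintro ⟨A, hA, hs⟩
    choose hP next hnext hr using hA
    let f : A → A := fun a => ⟨next a a.2, hnext a a.2⟩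
    refine ⟨fun i => (f^[i] ⟨s, hs⟩).1, rfl, fun i => ?_⟩
    simp only [Function.iterate_succ_apply']
    exact ⟨hr _ _, hP _ (f^[i] ⟨s, hs⟩).2⟩

theorem EGDeriv.exists_isEGPostFixed_union [DecidableEq S] {Γ : Finset S} {s : S}
    (h : EGDeriv r P Γ s) :
    ∃ A : Set S, s ∈ A ∪ ↑Γ ∧ ∀ a ∈ A, P a ∧ ∃ b ∈ A ∪ ↑Γ, r a b := by
  induction h with
  | merge hs => exact ⟨∅, Or.inr hs, by simp⟩
  | @step Γ s s' hP hr _ ih =>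
    obtain ⟨A, hs', hA⟩ := ih
    have hsub : A ∪ ↑(insert s Γ) ⊆ insert s A ∪ ↑Γ := by
      intro x
      simp only [Finset.coe_insert, Set.mem_union, Set.mem_insert_iff]
      tauto
    refine ⟨insert s A, Or.inl (Set.mem_insert s A), ?_⟩
    rintro a (rfl | ha)
    · exact ⟨hP, s', hsub hs', hr⟩
    · obtain ⟨hPa, b, hb, hab⟩ := hA a ha
      exact ⟨hPa, b, hsub hb, hab⟩

theorem EGDeriv.of_isEGPostFixed [Fintype S] [DecidableEq S] {A : Set S}
    (hA : IsEGPostFixed r P A) (Γ : Finset S) {s : S} (hs : s ∈ A) : EGDeriv r P Γ s := by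
  by_cases hsΓ : s ∈ Γ
  · exact .merge hsΓ
  · obtain ⟨hP, b, hb, hr⟩ := hA s hs
    exact .step hP hr (of_isEGPostFixed hA (insert s Γ) hb)
termination_by Γᶜ.card
decreasing_by
  rw [Finset.compl_insert]
  exact Finset.card_erase_lt_of_mem (Finset.mem_compl.mpr hsΓ)

end

theorem EGDeriv_iff_semantics_general
    {S : Type*} [Fintype S] [DecidableEq S]
    (r : S → S → Prop)
    (P : S → Prop) (s : S) :
    EGDeriv r P ∅ s ↔
      ∃ σ : ℕ → S, σ 0 = s ∧ ∀ i, r (σ i) (σ (i + 1)) ∧ P (σ i) := by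
  rw [exists_path_iff_exists_isEGPostFixed]
  constructor
  · intro h
    obtain ⟨A, hs, hA⟩ := h.exists_isEGPostFixed_union
    simp only [Finset.coe_empty, Set.union_empty] at hs hA
    exact ⟨A, hA, hs⟩
  · rintro ⟨A, hA, hs⟩
    exact .of_isEGPostFixed hA ∅ hs

/-- Soundness and completeness of the `EG` proof rules:
`∅ ⊢ EG(P, s)` is derivable iff there is an infinite path from `s` on which
`P` holds everywhere. -/
theorem EGDeriv_iff_semantics
    {S : Type*} [Fintype S] [Nonempty S] [DecidableEq S]
    (r : S → S → Prop) (htot : ∀ s, ∃ t, r s t)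
    (P : S → Prop) [DecidablePred P] (s : S) :
    EGDeriv r P ∅ s ↔
      ∃ σ : ℕ → S, σ 0 = s ∧ ∀ i, r (σ i) (σ (i + 1)) ∧ P (σ i) :=
  EGDeriv_iff_semantics_general r P s
end

section
/- Let S be a finite set with a total relation → and P : S → Prop. Define the semantic relation AF(P, s) as the least relation satisfying: AF(P, s) holds if P(s) holds, or if AF(P, s′) holds for all s′ ∈ Next(s). Then AF(P, s) holds if and only if every infinite path s₀, s₁, ... starting at s (s₀ = s, sᵢ → sᵢ₊₁) contains some index j with P(sⱼ). -/
/-!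
If `AF r P s`, induction on its derivation shows that every path from `s` meets `P`: a path
from `s` continues as a path from `σ 1`. Conversely, a state where `AF` fails violates `P` and,
by the `step` rule, has a successor where `AF` fails too; dependent choice strings these
successors into an infinite path avoiding `P`.
-/

/-- `AF(P, ·)` as the least relation satisfying: `AF(P, s)` holds if `P s`
holds, or if `AF(P, s')` holds for every successor `s'` of `s`. -/
inductive AF {S : Type*} (r : S → S → Prop) (P : S → Prop) : S → Prop
  | base {s : S} : P s → AF r P s
  | step {s : S} : (∀ s', r s s' → AF r P s') → AF r P s

section

variable {S : Type*} {r : S → S → Prop}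

theorem exists_path_of_forall_exists_rel {Q : S → Prop} (hQ : ∀ t, Q t → ∃ t', r t t' ∧ Q t')
    {s : S} (hs : Q s) :
    ∃ σ : ℕ → S, σ 0 = s ∧ (∀ i, r (σ i) (σ (i + 1))) ∧ ∀ i, Q (σ i) := by
  choose next hnext hQnext using hQ
  let τ : ℕ → {t // Q t} := fun n => (fun t => ⟨next t.1 t.2, hQnext t.1 t.2⟩)^[n] ⟨s, hs⟩
  refine ⟨fun n => (τ n).1, rfl, fun i => ?_, fun i => (τ i).2⟩
  simp only [τ, Function.iterate_succ_apply']
  exact hnext _ _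

variable {P : S → Prop}

theorem AF.exists_of_path {s : S} (h : AF r P s) (σ : ℕ → S) (hσ0 : σ 0 = s)
    (hσ : ∀ i, r (σ i) (σ (i + 1))) : ∃ j, P (σ j) := by
  induction h generalizing σ with
  | base hp => exact ⟨0, hσ0 ▸ hp⟩
  | step _ ih =>
    obtain ⟨j, hj⟩ := ih (σ 1) (hσ0 ▸ hσ 0) (fun i => σ (i + 1)) rfl (fun i => hσ (i + 1))
    exact ⟨j + 1, hj⟩

theorem exists_rel_not_AF_of_not_AF {t : S} (ht : ¬ AF r P t) : ∃ t', r t t' ∧ ¬ AF r P t' := by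
  by_contra! h
  exact ht (AF.step h)

theorem exists_path_forall_not_of_not_AF {s : S} (hs : ¬ AF r P s) :
    ∃ σ : ℕ → S, σ 0 = s ∧ (∀ i, r (σ i) (σ (i + 1))) ∧ ∀ j, ¬ P (σ j) := by
  obtain ⟨σ, hσ0, hσ, hnot⟩ := exists_path_of_forall_exists_rel (fun _ => exists_rel_not_AF_of_not_AF) hs
  exact ⟨σ, hσ0, hσ, fun j hP => hnot j (AF.base hP)⟩

end

theorem AF_iff_all_paths_general
    {S : Type*} (r : S → S → Prop)
    (P : S → Prop) (s : S) :
    AF r P s ↔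
      ∀ σ : ℕ → S, σ 0 = s → (∀ i, r (σ i) (σ (i + 1))) →
        ∃ j, P (σ j) := by
  refine ⟨AF.exists_of_path, fun hpaths => ?_⟩
  by_contra hs
  obtain ⟨σ, hσ0, hσ, hnot⟩ := exists_path_forall_not_of_not_AF hs
  obtain ⟨j, hj⟩ := hpaths σ hσ0 hσ
  exact hnot j hj

/-- the inductive `AF` predicate holds at `s` iff every infinite
path starting at `s` contains a state satisfying `P`. -/
theorem AF_iff_all_paths
    {S : Type*} [Fintype S] (r : S → S → Prop)
    (htot : ∀ s, ∃ t, r s t)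
    (P : S → Prop) (s : S) :
    AF r P s ↔
      ∀ σ : ℕ → S, σ 0 = s → (∀ i, r (σ i) (σ (i + 1))) →
        ∃ j, P (σ j) :=
  AF_iff_all_paths_general r P s
end

section
/- Let S be a finite set with a total relation →, C a finite set of predicates on S, and P : S → Prop. Say s satisfies fair-EG (written E_C G(P, s)) iff there exists an infinite path from s on which P holds at every state and each predicate in C holds infinitely often. Then E_C G(P, s) holds iff there exists a finite path s₀,...,sₙ from s with P holding at every sᵢ, an index p < n with sₙ = sₚ, and for each f ∈ C some index q with p ≤ q ≤ n such that f(s_q). -/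
/-!
Forward: a path in a finite state space visits some state `t` infinitely often. Choose a visit
`p` to `t`, witnesses after `p` for every fairness constraint, and a later visit `n` to `t`; the
prefix up to `n` is a lasso whose loop `[p, n]` meets every constraint.

Backward: unroll the lasso, walking the indices `0, 1, …, n - 1` and then cycling through
`p, …, n - 1` forever; every index of the loop recurs infinitely often.
-/

section Recurrence

variable {S ι : Type*}

theorem exists_le_forall_mem_Icc_of_infinite (C : Finset ι) (A : ι → Set ℕ)
    (hA : ∀ f ∈ C, (A f).Infinite) (p : ℕ) :
    ∃ M, ∀ f ∈ C, ∃ q ∈ A f, p ≤ q ∧ q ≤ M := by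
  choose! q hqA hpq using fun f hf => (hA f hf).exists_gt p
  exact ⟨C.sup q, fun f hf => ⟨q f, hqA f hf, (hpq f hf).le, Finset.le_sup hf⟩⟩

theorem exists_loop_meeting_infinite_sets [Finite S] (σ : ℕ → S) (C : Finset ι)
    (A : ι → Set ℕ) (hA : ∀ f ∈ C, (A f).Infinite) :
    ∃ p n, p < n ∧ σ n = σ p ∧ ∀ f ∈ C, ∃ q ∈ A f, p ≤ q ∧ q ≤ n := by
  obtain ⟨t, ht⟩ := Finite.exists_infinite_fiber σ
  rw [Set.infinite_coe_iff] at ht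
  obtain ⟨p, hp⟩ := ht.nonempty
  obtain ⟨M, hM⟩ := exists_le_forall_mem_Icc_of_infinite C A hA p
  obtain ⟨n, hn, hMn⟩ := ht.exists_gt (max p M)
  refine ⟨p, n, lt_of_le_of_lt (le_max_left _ _) hMn, hn.trans hp.symm, fun f hf => ?_⟩
  obtain ⟨q, hqA, hpq, hqM⟩ := hM f hf
  exact ⟨q, hqA, hpq, hqM.trans (le_max_right p M) |>.trans hMn.le⟩

end Recurrence

section Lasso

def lassoNext (p n k : ℕ) : ℕ := if k + 1 = n then p else k + 1

variable {p n : ℕ}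

theorem lassoNext_lt (hpn : p < n) {k : ℕ} (hk : k < n) : lassoNext p n k < n := by
  unfold lassoNext
  split_ifs <;> omega

theorem iterate_lassoNext_lt (hpn : p < n) {a : ℕ} (ha : a < n) (i : ℕ) :
    (lassoNext p n)^[i] a < n := by
  induction i with
  | zero => exact ha
  | succ i ih => rw [Function.iterate_succ_apply']; exact lassoNext_lt hpn ih

theorem iterate_lassoNext_of_add_lt {a k : ℕ} (h : a + k < n) :
    (lassoNext p n)^[k] a = a + k := by
  induction k with
  | zero => rfl
  | succ k ih =>
    rw [Function.iterate_succ_apply', ih (by omega), lassoNext, if_neg (by omega)]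
    rfl

theorem iterate_lassoNext_to_start {a : ℕ} (ha : a < n) :
    (lassoNext p n)^[n - a] a = p := by
  obtain ⟨k, hk⟩ : ∃ k, n - a = k + 1 := ⟨n - a - 1, by omega⟩
  rw [hk, Function.iterate_succ_apply', iterate_lassoNext_of_add_lt (by omega), lassoNext,
    if_pos (by omega)]

theorem exists_iterate_lassoNext_eq {a q : ℕ} (ha : a < n) (hpq : p ≤ q) (hqn : q < n) :
    ∃ k, (lassoNext p n)^[k] a = q := by
  rcases le_or_gt a q with haq | hqa
  · exact ⟨q - a, by rw [iterate_lassoNext_of_add_lt (by omega)]; omega⟩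
  · refine ⟨(q - p) + (n - a), ?_⟩
    rw [Function.iterate_add_apply, iterate_lassoNext_to_start ha,
      iterate_lassoNext_of_add_lt (by omega)]
    omega

theorem infinite_setOf_iterate_lassoNext_eq (hpn : p < n) {q : ℕ} (hpq : p ≤ q) (hqn : q < n) :
    {i | (lassoNext p n)^[i] 0 = q}.Infinite := by
  refine Set.infinite_of_forall_exists_gt fun m => ?_
  obtain ⟨k, hk⟩ := exists_iterate_lassoNext_eq
    (iterate_lassoNext_lt hpn (a := 0) (by omega) (m + 1)) hpq hqn
  exact ⟨k + (m + 1), by rwa [Set.mem_ofPred_eq, Function.iterate_add_apply], by omega⟩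

theorem apply_lassoNext {S : Type*} {sf : ℕ → S} (hloop : sf n = sf p) (k : ℕ) :
    sf (lassoNext p n k) = sf (k + 1) := by
  unfold lassoNext
  split_ifs with h
  · rw [h, hloop]
  · rfl

end Lasso

theorem fair_EG_iff_fair_lasso_general
    {S : Type*} [Fintype S] (r : S → S → Prop)
    (C : Finset (S → Prop)) (P : S → Prop) (s : S) :
    (∃ σ : ℕ → S, σ 0 = s ∧ (∀ i, r (σ i) (σ (i + 1))) ∧
        (∀ i, P (σ i)) ∧ ∀ f ∈ C, {i : ℕ | f (σ i)}.Infinite) ↔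
      ∃ (sf : ℕ → S) (n : ℕ), sf 0 = s ∧
        (∀ i < n, r (sf i) (sf (i + 1))) ∧
        (∀ i ≤ n, P (sf i)) ∧
        ∃ p < n, sf n = sf p ∧
          ∀ f ∈ C, ∃ q, p ≤ q ∧ q ≤ n ∧ f (sf q) := by
  constructor
  · rintro ⟨σ, h0, hr, hP, hC⟩
    obtain ⟨p, n, hpn, hloop, hmeet⟩ := exists_loop_meeting_infinite_sets σ C _ hC
    refine ⟨σ, n, h0, fun i _ => hr i, fun i _ => hP i, p, hpn, hloop, fun f hf => ?_⟩
    obtain ⟨q, hfq, hpq, hqn⟩ := hmeet f hf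
    exact ⟨q, hpq, hqn, hfq⟩
  · rintro ⟨sf, n, h0, hr, hP, p, hpn, hloop, hC⟩
    have hidx := iterate_lassoNext_lt hpn (a := 0) (by omega)
    refine ⟨fun i => sf ((lassoNext p n)^[i] 0), h0, fun i => ?_,
      fun i => hP _ (hidx i).le, fun f hf => ?_⟩
    · show r (sf _) (sf _)
      rw [Function.iterate_succ_apply', apply_lassoNext hloop]
      exact hr _ (hidx i)
    · obtain ⟨q, hpq, hqn, hfq⟩ := hC f hf
      -- the loop's endpoint `n` is not itself an index of the unrolled path; use `p` instead
      obtain ⟨q', hpq', hq'n, hfq'⟩ : ∃ q', p ≤ q' ∧ q' < n ∧ f (sf q') := by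
        rcases hqn.lt_or_eq with hqn | rfl
        · exact ⟨q, hpq, hqn, hfq⟩
        · exact ⟨p, le_rfl, hpn, hloop ▸ hfq⟩
      refine (infinite_setOf_iterate_lassoNext_eq hpn hpq' hq'n).mono fun i hi => ?_
      simp only [Set.mem_ofPred_eq] at hi ⊢
      rwa [hi]

/-- fair `EG`.  There is an infinite path from `s` on which `P`
holds everywhere and each predicate in `C` holds infinitely often, iff there
is a finite lasso path from `s` inside `P` such that each predicate in `C`
holds at some state of the loop. -/
theorem fair_EG_iff_fair_lasso
    {S : Type*} [Fintype S] (r : S → S → Prop)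
    (htot : ∀ s, ∃ t, r s t)
    (C : Finset (S → Prop)) (P : S → Prop) (s : S) :
    (∃ σ : ℕ → S, σ 0 = s ∧ (∀ i, r (σ i) (σ (i + 1))) ∧
        (∀ i, P (σ i)) ∧ ∀ f ∈ C, {i : ℕ | f (σ i)}.Infinite) ↔
      ∃ (sf : ℕ → S) (n : ℕ), sf 0 = s ∧
        (∀ i < n, r (sf i) (sf (i + 1))) ∧
        (∀ i ≤ n, P (sf i)) ∧
        ∃ p < n, sf n = sf p ∧
          ∀ f ∈ C, ∃ q, p ≤ q ∧ q ≤ n ∧ f (sf q) :=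
  fair_EG_iff_fair_lasso_general r C P s
end

section
/- Let S be a finite set with a total relation →, and P₁, P₂ : S → Prop. Define semantic AR(P₁, P₂, s) as the existence of a possibly infinite rooted Next-branching tree with root s, P₂ at every node, and P₁ at every leaf. Define semantic ER for the negated predicates as in the paper. Then AR(P₁, P₂, s) holds if and only if every infinite path s₀, s₁, ... from s satisfies: for all j, if P₁ fails at every sᵢ with i < j, then P₂ holds at sⱼ (the standard 'release' semantics of A[φ₁ R φ₂]). -/
/-!
If the tree exists, induction along a path shows that every prefix of the path up to the
first `P₁` position is a node: a node where `P₁` fails is not a leaf, so by full branching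
it has every successor state as a child. Conversely, the tree of all finite paths from `s`
that avoid `P₁` except possibly at their endpoint works: a node is the endpoint of a finite
path, which by totality extends to an infinite one, so it satisfies `P₂`; and a node where
`P₁` fails has a child.
-/

section

variable {S : Type*} {r : S → S → Prop}

/-- `σ n :: revPrefix σ n` is the tree node reached by following `σ` for `n` steps. -/
def revPrefix (σ : ℕ → S) : ℕ → List S
  | 0 => []
  | n + 1 => σ n :: revPrefix σ n

theorem revPrefix_congr {σ τ : ℕ → S} {n : ℕ} (h : ∀ i < n, σ i = τ i) :
    revPrefix σ n = revPrefix τ n := by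
  induction n with
  | zero => rfl
  | succ n ih =>
    simp only [revPrefix, h n n.lt_succ_self, ih fun i hi => h i (hi.trans n.lt_succ_self)]

theorem getLast?_cons_revPrefix (σ : ℕ → S) (n : ℕ) :
    (σ n :: revPrefix σ n).getLast? = some (σ 0) := by
  induction n with
  | zero => rfl
  | succ n ih => rwa [revPrefix, List.getLast?_cons_cons]

theorem exists_path_extending (htot : ∀ s, ∃ t, r s t) {τ : ℕ → S} {n : ℕ}
    (hτ : ∀ i < n, r (τ i) (τ (i + 1))) :
    ∃ σ : ℕ → S, (∀ i ≤ n, σ i = τ i) ∧ ∀ i, r (σ i) (σ (i + 1)) := by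
  choose f hf using htot
  refine ⟨fun i => if i ≤ n then τ i else f^[i - n] (τ n), fun i hi => if_pos hi, fun i => ?_⟩
  have hiter : ∀ i, n ≤ i → (if i ≤ n then τ i else f^[i - n] (τ n)) = f^[i - n] (τ n) := by
    intro i hi
    split_ifs with h
    · rw [le_antisymm h hi, Nat.sub_self, Function.iterate_zero_apply]
    · rfl
  dsimp only
  rcases lt_or_ge i n with hi | hi
  · simpa only [if_pos hi.le, if_pos (Nat.succ_le_of_lt hi)] using hτ i hi
  · rw [hiter i hi, hiter (i + 1) (hi.trans i.le_succ), Nat.sub_add_comm hi,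
      Function.iterate_succ_apply']
    exact hf _

namespace StateTree

variable {s : S} {P : S → Prop}

theorem mem_cons_revPrefix (T : StateTree S r s)
    (hleaf : ∀ a l, T.mem (a :: l) → (∀ b, ¬ T.mem (b :: a :: l)) → P a)
    {σ : ℕ → S} (hσ0 : σ 0 = s) {j : ℕ} (hstep : ∀ i < j, r (σ i) (σ (i + 1)))
    (hP : ∀ i < j, ¬ P (σ i)) : T.mem (σ j :: revPrefix σ j) := by
  induction j with
  | zero => simpa only [revPrefix, hσ0] using T.root_mem
  | succ n ih =>
    have hmem := ih (fun i hi => hstep i (hi.trans n.lt_succ_self))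
      (fun i hi => hP i (hi.trans n.lt_succ_self))
    have hchild : ∃ b, T.mem (b :: σ n :: revPrefix σ n) := by
      by_contra! hno
      exact hP n n.lt_succ_self (hleaf _ _ hmem hno)
    exact (T.branching _ _ hmem hchild _).mpr (hstep n n.lt_succ_self)

end StateTree

def IsAvoidingNode (r : S → S → Prop) (P : S → Prop) (s : S) (L : List S) : Prop :=
  ∃ (τ : ℕ → S) (n : ℕ), τ 0 = s ∧ (∀ i < n, r (τ i) (τ (i + 1))) ∧ (∀ i < n, ¬ P (τ i)) ∧
    L = τ n :: revPrefix τ n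

namespace IsAvoidingNode

variable {P : S → Prop} {s : S}

theorem singleton : IsAvoidingNode r P s [s] :=
  ⟨fun _ => s, 0, rfl, fun _ h => absurd h (Nat.not_lt_zero _),
    fun _ h => absurd h (Nat.not_lt_zero _), rfl⟩

theorem getLast? {L : List S} (h : IsAvoidingNode r P s L) : L.getLast? = some s := by
  obtain ⟨τ, n, hτ0, -, -, rfl⟩ := h
  rw [getLast?_cons_revPrefix, hτ0]

theorem of_cons {a : S} {l : List S} (h : IsAvoidingNode r P s (a :: l)) (hl : l ≠ []) :
    IsAvoidingNode r P s l := by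
  obtain ⟨τ, n, hτ0, hτ, hP, heq⟩ := h
  cases n with
  | zero => exact absurd (List.cons.inj heq).2 hl
  | succ n =>
    exact ⟨τ, n, hτ0, fun i hi => hτ i (hi.trans n.lt_succ_self),
      fun i hi => hP i (hi.trans n.lt_succ_self), (List.cons.inj heq).2⟩

theorem rel {a b : S} {l : List S} (h : IsAvoidingNode r P s (b :: a :: l)) : r a b := by
  obtain ⟨τ, n, -, hτ, -, heq⟩ := h
  cases n with
  | zero => simp [revPrefix] at heq
  | succ n =>
    simp only [revPrefix, List.cons.injEq] at heq
    rw [heq.1, heq.2.1]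
    exact hτ n n.lt_succ_self

theorem not_of_cons_cons {a b : S} {l : List S} (h : IsAvoidingNode r P s (b :: a :: l)) :
    ¬ P a := by
  obtain ⟨τ, n, -, -, hP, heq⟩ := h
  cases n with
  | zero => simp [revPrefix] at heq
  | succ n =>
    simp only [revPrefix, List.cons.injEq] at heq
    exact heq.2.1 ▸ hP n n.lt_succ_self

theorem cons {a b : S} {l : List S} (h : IsAvoidingNode r P s (a :: l)) (ha : ¬ P a)
    (hab : r a b) : IsAvoidingNode r P s (b :: a :: l) := by
  obtain ⟨τ, n, hτ0, hτ, hP, heq⟩ := h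
  obtain ⟨rfl, rfl⟩ := List.cons.inj heq
  have hupd : ∀ i ≤ n, Function.update τ (n + 1) b i = τ i := fun i hi =>
    Function.update_of_ne (by omega) _ _
  refine ⟨Function.update τ (n + 1) b, n + 1, by rw [hupd 0 n.zero_le, hτ0], fun i hi => ?_,
    fun i hi => ?_, ?_⟩
  · rcases Nat.lt_succ_iff_lt_or_eq.mp hi with hi | rfl
    · rw [hupd i hi.le, hupd (i + 1) hi]
      exact hτ i hi
    · rw [hupd i le_rfl, Function.update_self]
      exact hab
  · rw [hupd i (Nat.lt_succ_iff.mp hi)]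
    rcases Nat.lt_succ_iff_lt_or_eq.mp hi with hi | rfl
    · exact hP i hi
    · exact ha
  · simp only [revPrefix, Function.update_self, hupd n le_rfl,
      revPrefix_congr fun i hi => hupd i hi.le]

end IsAvoidingNode

def avoidingTree (r : S → S → Prop) (P : S → Prop) (s : S) : StateTree S r s where
  mem := IsAvoidingNode r P s
  root_mem := .singleton
  last_root _ h := h.getLast?
  tail_mem _ _ h hl := h.of_cons hl
  branching _ _ h := fun ⟨_, hchild⟩ _ => ⟨IsAvoidingNode.rel, h.cons hchild.not_of_cons_cons⟩

end

theorem AR_tree_iff_release_general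
    {S : Type*} (r : S → S → Prop)
    (htot : ∀ s, ∃ t, r s t)
    (P₁ P₂ : S → Prop) (s : S) :
    (∃ T : StateTree S r s,
        (∀ a l, T.mem (a :: l) → P₂ a) ∧
        (∀ a l, T.mem (a :: l) → (∀ b, ¬ T.mem (b :: a :: l)) → P₁ a)) ↔
      ∀ σ : ℕ → S, σ 0 = s → (∀ i, r (σ i) (σ (i + 1))) →
        ∀ j, (∀ i < j, ¬ P₁ (σ i)) → P₂ (σ j) := by
  constructor
  · rintro ⟨T, hP₂, hP₁⟩ σ hσ0 hstep j hj
    exact hP₂ _ _ (T.mem_cons_revPrefix hP₁ hσ0 (fun i _ => hstep i) hj)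
  · intro H
    refine ⟨avoidingTree r P₁ s, fun a l ⟨τ, n, hτ0, hτ, hP, heq⟩ => ?_, fun a l h hleaf => ?_⟩
    · obtain ⟨σ, hστ, hσ⟩ := exists_path_extending htot hτ
      rw [(List.cons.inj heq).1, ← hστ n le_rfl]
      exact H σ (by rw [hστ 0 n.zero_le, hτ0]) hσ n fun i hi => hστ i hi.le ▸ hP i hi
    · by_contra ha
      obtain ⟨b, hab⟩ := htot a
      exact hleaf b (IsAvoidingNode.cons h ha hab)

/-- the tree semantics of `AR(P₁, P₂, s)` (a possibly infinite
`Next`-branching tree rooted at `s` with `P₂` at every node and `P₁` at every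
leaf) coincides with the standard release semantics: on every infinite path
from `s`, `P₂` holds at every position not strictly preceded by a `P₁`
position. -/
theorem AR_tree_iff_release
    {S : Type*} [Fintype S] (r : S → S → Prop)
    (htot : ∀ s, ∃ t, r s t)
    (P₁ P₂ : S → Prop) (s : S) :
    (∃ T : StateTree S r s,
        (∀ a l, T.mem (a :: l) → P₂ a) ∧
        (∀ a l, T.mem (a :: l) → (∀ b, ¬ T.mem (b :: a :: l)) → P₁ a)) ↔
      ∀ σ : ℕ → S, σ 0 = s → (∀ i, r (σ i) (σ (i + 1))) →
        ∀ j, (∀ i < j, ¬ P₁ (σ i)) → P₂ (σ j) :=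
  AR_tree_iff_release_general r htot P₁ P₂ s
end
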